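/- arXiv:1808.09533 — 3 statements merged into one kernel-verified Lean document; each statement's English description precedes it below -/
import Mathlib

section
/- Let (X, d, d_u) be a topometric space with d complete, d and d_u bounded by 1, and d_u lower semicontinuous with respect to d. Then the metric d̂_u(f,h) = ∫₀¹ d_u(f(ω),h(ω)) dω on L⁰([0,1],X) is lower semicontinuous with respect to the topology induced by d̂(f,h) = ∫₀¹ d(f(ω),h(ω)) dω; that is, for every r > 0 the set {(f,h) : d̂_u(f,h) > r} is open in L⁰([0,1],X)² with the d̂-topology. -/
/-!
A `d̂`-convergent sequence converges in measure, so along a subsequence it converges almost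
everywhere; lower semicontinuity of `dᵤ` then bounds `dᵤ (f ω) (h ω)` pointwise by the `liminf`,
and Fatou's lemma bounds `d̂ᵤ(f,h)` by the `liminf` of the `d̂ᵤ`-distances.

The only delicate point is measurability of `ω ↦ dᵤ (f ω) (h ω)` when `X` is not separable.
A Borel map from a standard Borel space has separable range: an uncountable `ε`-separated set in
the range has cardinality `𝔠` (one preimage of each of its points yields an uncountable Borel
set), and the preimages of unions of `ε/2`-balls around its points are `2 ^ 𝔠` distinct Borel
sets. On separable ranges the Borel σ-algebra of `X × X` is the product one.
-/

open MeasureTheory Set Cardinal Function Filter Topology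
open scoped ENNReal

universe u v

theorem MeasurableSpace.cardinal_measurableSet_le_continuum_of_countablyGenerated
    {α : Type u} [m : MeasurableSpace α] [MeasurableSpace.CountablyGenerated α] :
    #{s : Set α | MeasurableSet s} ≤ 𝔠 := by
  obtain ⟨b, hb, hm⟩ := MeasurableSpace.CountablyGenerated.isCountablyGenerated (α := α)
  subst hm
  exact cardinal_measurableSet_le_continuum (hb.le_aleph0.trans aleph0_le_continuum)

theorem measurableSet_range_of_mem_of_pairwise_disjoint {α : Type u} {ι : Type v}
    [MeasurableSpace α] [MeasurableEq α] {A : ι → Set α} (hdisj : Pairwise (Disjoint on A))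
    (hmeas : ∀ S : Set ι, MeasurableSet (⋃ i ∈ S, A i)) {t : ι → α} (ht : ∀ i, t i ∈ A i) :
    MeasurableSet (range t) := by
  classical
  -- `π` collapses each `A i` onto `t i`; `range t` is its fixed-point set inside `⋃ i, A i`.
  let π : α → α := fun ω => if h : ∃ i, ω ∈ A i then t h.choose else ω
  have hπ : ∀ i, ∀ ω ∈ A i, π ω = t i := fun i ω hω => by
    have h : ∃ i, ω ∈ A i := ⟨i, hω⟩
    simp only [π, dif_pos h, hdisj.eq (not_disjoint_iff.2 ⟨ω, h.choose_spec, hω⟩)]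
  have hU : MeasurableSet (⋃ i, A i) := by simpa using hmeas univ
  have hπ_meas : Measurable π := by
    intro B hB
    have : π ⁻¹' B = (⋃ i ∈ {i | t i ∈ B}, A i) ∪ ((⋃ i, A i)ᶜ ∩ B) := by
      ext ω
      by_cases h : ∃ i, ω ∈ A i
      · obtain ⟨i, hi⟩ := h
        simp only [mem_preimage, hπ i ω hi, mem_union, mem_iUnion, mem_ofPred_eq, mem_inter_iff,
          mem_compl_iff, exists_prop]
        exact ⟨fun h => .inl ⟨i, h, hi⟩, fun h => h.elim
          (fun ⟨j, hj, hj'⟩ => hdisj.eq (not_disjoint_iff.2 ⟨ω, hj', hi⟩) ▸ hj)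
          (fun h => (h.1 ⟨i, hi⟩).elim)⟩
      · push Not at h
        simp [π, h]
    rw [this]
    exact (hmeas _).union (hU.compl.inter hB)
  have : range t = (⋃ i, A i) ∩ {ω | π ω = ω} := by
    ext ω
    constructor
    · rintro ⟨i, rfl⟩
      exact ⟨mem_iUnion.2 ⟨i, ht i⟩, hπ i _ (ht i)⟩
    · rintro ⟨hω, hfix⟩
      obtain ⟨i, hi⟩ := mem_iUnion.1 hω
      exact ⟨i, (hπ i ω hi).symm.trans hfix⟩
  rw [this]
  exact hU.inter (measurableSet_eq_fun hπ_meas measurable_id)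

theorem continuum_le_lift_mk_of_measurableSet_range {α : Type u} {ι : Type v}
    [MeasurableSpace α] [StandardBorelSpace α] {t : ι → α} (ht : Injective t)
    (hT : MeasurableSet (range t)) (hι : ¬ Countable ι) : 𝔠 ≤ lift.{u} #ι := by
  have : StandardBorelSpace (range t) := hT.standardBorel
  have hT_unc : ¬ Countable (range t) := fun h =>
    hι (Countable.of_equiv _ (Equiv.ofInjective t ht).symm)
  have hT_card : #(range t) = 𝔠 := by
    simpa [mk_real] using lift_mk_eq'.2
      ⟨(PolishSpace.measurableEquivOfNotCountable hT_unc not_countable (β := ℝ)).toEquiv⟩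
  simpa [hT_card] using (mk_range_eq_of_injective ht).le

theorem countable_of_pairwise_disjoint_of_measurableSet_biUnion {α : Type u} {ι : Type v}
    [MeasurableSpace α] [StandardBorelSpace α] {A : ι → Set α} (hne : ∀ i, (A i).Nonempty)
    (hdisj : Pairwise (Disjoint on A)) (hmeas : ∀ S : Set ι, MeasurableSet (⋃ i ∈ S, A i)) :
    Countable ι := by
  by_contra hι
  choose t ht using hne
  have ht_inj : Injective t := fun i j hij =>
    hdisj.eq (not_disjoint_iff.2 ⟨t i, ht i, hij ▸ ht j⟩)
  have hcont := continuum_le_lift_mk_of_measurableSet_range ht_inj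
    (measurableSet_range_of_mem_of_pairwise_disjoint hdisj hmeas ht) hι
  -- The unions `⋃ i ∈ S, A i` are pairwise distinct, so `2 ^ #ι ≤ 𝔠 ≤ #ι`.
  have hunion_inj : Injective fun S : Set ι =>
      (⟨⋃ i ∈ S, A i, hmeas S⟩ : {s : Set α | MeasurableSet s}) := by
    have key : ∀ S i, i ∈ S ↔ t i ∈ ⋃ j ∈ S, A j := fun S i => by
      refine ⟨fun hi => mem_biUnion hi (ht i), fun hi => ?_⟩
      obtain ⟨j, hj, hij⟩ := mem_iUnion₂.1 hi
      exact hdisj.eq (not_disjoint_iff.2 ⟨t i, hij, ht i⟩) ▸ hj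
    intro S S' h
    ext i
    rw [key S, key S', (Subtype.mk.inj h : _)]
  have h2 : lift.{u} #(Set ι) ≤ lift.{v} #{s : Set α | MeasurableSet s} :=
    lift_mk_le'.2 ⟨⟨_, hunion_inj⟩⟩
  have : 2 ^ lift.{u} #ι ≤ lift.{u} #ι := by
    calc 2 ^ lift.{u} #ι = lift.{u} #(Set ι) := by simp [mk_set]
    _ ≤ lift.{v} 𝔠 :=
      h2.trans (lift_le.2 MeasurableSpace.cardinal_measurableSet_le_continuum_of_countablyGenerated)
    _ = 𝔠 := lift_continuum
    _ ≤ lift.{u} #ι := hcont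
  exact (cantor _).not_ge this

theorem Metric.IsSeparated.countable_of_subset_range {α : Type u} {X : Type v}
    [MeasurableSpace α] [StandardBorelSpace α] [PseudoEMetricSpace X] [MeasurableSpace X]
    [OpensMeasurableSpace X] {f : α → X} (hf : Measurable f) {ε : ℝ≥0∞} (hε : ε ≠ 0)
    {D : Set X} (hD : D ⊆ range f) (hsep : Metric.IsSeparated ε D) : D.Countable := by
  rw [← countable_coe_iff]
  refine countable_of_pairwise_disjoint_of_measurableSet_biUnion
    (A := fun d : D => f ⁻¹' Metric.eball d (ε / 2)) ?_ ?_ ?_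
  · rintro ⟨d, hd⟩
    obtain ⟨ω, rfl⟩ := hD hd
    exact ⟨ω, Metric.mem_eball_self (ENNReal.half_pos hε)⟩
  · intro d d' hne
    refine (Metric.eball_disjoint ?_).preimage f
    rw [ENNReal.add_halves]
    exact (hsep d.2 d'.2 (Subtype.coe_ne_coe.2 hne)).le
  · intro S
    simp only [← preimage_iUnion₂]
    exact hf (isOpen_biUnion fun _ _ => Metric.isOpen_eball).measurableSet

theorem Measurable.isSeparable_range {α : Type u} {X : Type v}
    [MeasurableSpace α] [StandardBorelSpace α] [PseudoEMetricSpace X] [MeasurableSpace X]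
    [OpensMeasurableSpace X] {f : α → X} (hf : Measurable f) :
    TopologicalSpace.IsSeparable (range f) := by
  refine (EMetric.subset_countable_closure_of_almost_dense_set _ fun ε hε => ?_).imp
    fun t ht => ⟨ht.2.1, ht.2.2⟩
  obtain ⟨δ, hδ, hδε⟩ := ENNReal.lt_iff_exists_nnreal_btwn.1 hε
  obtain ⟨N, hN⟩ : ∃ N, Maximal (fun N => N ⊆ range f ∧ Metric.IsSeparated δ N) N := by
    refine zorn_subset _ fun c hc hchain => ⟨⋃₀ c, ⟨sUnion_subset fun N hN => (hc hN).1, ?_⟩,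
      fun N hN => subset_sUnion_of_mem hN⟩
    exact (pairwise_sUnion hchain.directedOn).2 fun N hN => (hc hN).2
  refine ⟨N, hN.prop.2.countable_of_subset_range hf (by exact_mod_cast hδ.ne') hN.prop.1, ?_⟩
  exact (Metric.isCover_iff_subset_iUnion_closedEBall.1 (.of_maximal_isSeparated hN)).trans
    (iUnion₂_mono fun x _ => Metric.closedEBall_subset_closedEBall hδε.le)

theorem lowerSemicontinuous_of_isClosed_sublevel {Z : Type*} [TopologicalSpace Z] {φ : Z → ℝ}
    (hφ : ∀ z, 0 ≤ φ z) (hcl : ∀ r, 0 ≤ r → IsClosed {z | φ z ≤ r}) : LowerSemicontinuous φ := by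
  refine lowerSemicontinuous_iff_isClosed_preimage.2 fun r => ?_
  rcases le_or_gt 0 r with hr | hr
  · exact hcl r hr
  · convert isClosed_empty
    exact eq_empty_of_forall_notMem fun z hz => (hr.trans_le (hφ z)).not_ge hz

theorem LowerSemicontinuous.le_liminf_comp {X γ ι : Type*} [TopologicalSpace X]
    [CompleteLinearOrder γ] {φ : X → γ} (hφ : LowerSemicontinuous φ) {l : Filter ι} {u : ι → X}
    {x : X} (hu : Tendsto u l (𝓝 x)) : φ x ≤ liminf (fun i => φ (u i)) l :=
  (hφ.le_liminf x).trans (liminf_le_liminf_of_le hu)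

theorem LowerSemicontinuous.measurable_comp_prodMk {α X Y β : Type*}
    [MeasurableSpace α] [StandardBorelSpace α]
    [PseudoEMetricSpace X] [MeasurableSpace X] [OpensMeasurableSpace X]
    [PseudoEMetricSpace Y] [MeasurableSpace Y] [OpensMeasurableSpace Y]
    [TopologicalSpace β] [MeasurableSpace β] [BorelSpace β] [LinearOrder β] [OrderTopology β]
    [SecondCountableTopology β] {φ : X × Y → β} (hφ : LowerSemicontinuous φ)
    {f : α → X} {g : α → Y} (hf : Measurable f) (hg : Measurable g) :
    Measurable fun ω => φ (f ω, g ω) := by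
  have := hf.isSeparable_range.separableSpace
  have := hg.isSeparable_range.separableSpace
  have := UniformSpace.secondCountable_of_separable (range f)
  have := UniformSpace.secondCountable_of_separable (range g)
  have hφ' : Measurable fun p : range f × range g => φ (p.1, p.2) :=
    (hφ.comp (continuous_subtype_val.prodMap continuous_subtype_val)).measurable
  exact hφ'.comp (f := fun ω => (rangeFactorization f ω, rangeFactorization g ω))
    (hf.subtype_mk.prodMk hg.subtype_mk)

theorem LowerSemicontinuous.integrable_comp_prodMk {α X Y : Type*}
    [MeasurableSpace α] [StandardBorelSpace α] {μ : Measure α} [IsFiniteMeasure μ]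
    [PseudoEMetricSpace X] [MeasurableSpace X] [OpensMeasurableSpace X]
    [PseudoEMetricSpace Y] [MeasurableSpace Y] [OpensMeasurableSpace Y]
    {φ : X × Y → ℝ} (hφ : LowerSemicontinuous φ) {C : ℝ} (hC : ∀ p, ‖φ p‖ ≤ C)
    {f : α → X} {g : α → Y} (hf : Measurable f) (hg : Measurable g) :
    Integrable (fun ω => φ (f ω, g ω)) μ :=
  .of_bound (hφ.measurable_comp_prodMk hf hg).aestronglyMeasurable C (.of_forall fun _ => hC _)

theorem MeasureTheory.tendstoInMeasure_of_tendsto_integral_dist {α ι X : Type*}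
    [MeasurableSpace α] {μ : Measure α} [PseudoMetricSpace X] {l : Filter ι}
    {g : ι → α → X} {g₀ : α → X}
    (hint : ∀ i, Integrable (fun ω => dist (g i ω) (g₀ ω)) μ)
    (hlim : Tendsto (fun i => ∫ ω, dist (g i ω) (g₀ ω) ∂μ) l (𝓝 0)) :
    TendstoInMeasure μ g l g₀ := by
  refine tendstoInMeasure_iff_dist.2 fun ε hε => ?_
  have markov : ∀ i, μ {ω | ε ≤ dist (g i ω) (g₀ ω)}
      ≤ ENNReal.ofReal (∫ ω, dist (g i ω) (g₀ ω) ∂μ) / ENNReal.ofReal ε := fun i => by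
    rw [ofReal_integral_eq_lintegral_ofReal (hint i) (.of_forall fun _ => dist_nonneg)]
    refine le_trans (measure_mono fun ω hω => ?_)
      (meas_ge_le_lintegral_div (hint i).1.aemeasurable.ennreal_ofReal
        (ENNReal.ofReal_pos.2 hε).ne' ENNReal.ofReal_ne_top)
    exact ENNReal.ofReal_le_ofReal hω
  have hbound : Tendsto (fun i => ENNReal.ofReal (∫ ω, dist (g i ω) (g₀ ω) ∂μ) / ENNReal.ofReal ε)
      l (𝓝 0) := by
    simpa using ENNReal.Tendsto.div_const (ENNReal.tendsto_ofReal hlim)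
      (.inr (ENNReal.ofReal_pos.2 hε).ne')
  exact tendsto_of_tendsto_of_tendsto_of_le_of_le tendsto_const_nhds hbound (fun _ => zero_le)
    markov

theorem MeasureTheory.TendstoInMeasure.prodMk {α ι E F : Type*} [MeasurableSpace α]
    {μ : Measure α} [PseudoEMetricSpace E] [PseudoEMetricSpace F] {l : Filter ι}
    {f : ι → α → E} {f₀ : α → E} {g : ι → α → F} {g₀ : α → F} (hf : TendstoInMeasure μ f l f₀)
    (hg : TendstoInMeasure μ g l g₀) :
    TendstoInMeasure μ (fun i ω => (f i ω, g i ω)) l (fun ω => (f₀ ω, g₀ ω)) := by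
  intro ε hε
  have hle : ∀ i, μ {ω | ε ≤ edist (f i ω, g i ω) (f₀ ω, g₀ ω)}
      ≤ μ {ω | ε ≤ edist (f i ω) (f₀ ω)} + μ {ω | ε ≤ edist (g i ω) (g₀ ω)} := fun i =>
    (measure_mono fun ω hω => by simpa [Prod.edist_eq, le_max_iff] using hω).trans
      (measure_union_le _ _)
  have hsum := (hf ε hε).add (hg ε hε)
  rw [add_zero] at hsum
  exact tendsto_of_tendsto_of_tendsto_of_le_of_le tendsto_const_nhds hsum (fun _ => zero_le) hle

theorem MeasureTheory.integral_le_of_tendsto_ae_of_lowerSemicontinuous {α ι Y : Type*}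
    [MeasurableSpace α] {μ : Measure α} [TopologicalSpace Y] {φ : Y → ℝ}
    (hφ : LowerSemicontinuous φ) (hφ0 : ∀ y, 0 ≤ φ y) {l : Filter ι} [l.IsCountablyGenerated]
    [l.NeBot] {u : ι → α → Y} {u₀ : α → Y} (hu : ∀ᵐ ω ∂μ, Tendsto (fun i => u i ω) l (𝓝 (u₀ ω)))
    (hint : ∀ i, Integrable (fun ω => φ (u i ω)) μ) (hint₀ : Integrable (fun ω => φ (u₀ ω)) μ)
    {r : ℝ} (hr : ∀ᶠ i in l, ∫ ω, φ (u i ω) ∂μ ≤ r) : ∫ ω, φ (u₀ ω) ∂μ ≤ r := by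
  have hψ : LowerSemicontinuous (ENNReal.ofReal ∘ φ) :=
    ENNReal.continuous_ofReal.comp_lowerSemicontinuous hφ ENNReal.ofReal_mono
  have hr0 : 0 ≤ r := hr.exists.elim fun i hi => (integral_nonneg fun _ => hφ0 _).trans hi
  have lintegral_eq : ∀ v : α → Y, Integrable (fun ω => φ (v ω)) μ →
      ∫⁻ ω, ENNReal.ofReal (φ (v ω)) ∂μ = ENNReal.ofReal (∫ ω, φ (v ω) ∂μ) := fun v hv =>
    (ofReal_integral_eq_lintegral_ofReal hv (.of_forall fun _ => hφ0 _)).symm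
  rw [← ENNReal.ofReal_le_ofReal_iff hr0, ← lintegral_eq u₀ hint₀]
  calc ∫⁻ ω, ENNReal.ofReal (φ (u₀ ω)) ∂μ
      ≤ ∫⁻ ω, liminf (fun i => ENNReal.ofReal (φ (u i ω))) l ∂μ :=
        lintegral_mono_ae (hu.mono fun ω hω => hψ.le_liminf_comp hω)
    _ ≤ liminf (fun i => ∫⁻ ω, ENNReal.ofReal (φ (u i ω)) ∂μ) l :=
        lintegral_liminf_le' fun i => (hint i).1.aemeasurable.ennreal_ofReal
    _ ≤ ENNReal.ofReal r := liminf_le_of_frequently_le' <| hr.frequently.mono fun i hi => by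
        rw [lintegral_eq _ (hint i)]
        exact ENNReal.ofReal_le_ofReal hi

theorem stmt2_general {X : Type*} [MetricSpace X]
    [MeasurableSpace X] [BorelSpace X]
    (du : X → X → ℝ)
    (hdu_refines : ∀ x y : X, dist x y ≤ du x y)
    (hdu_lsc : ∀ r : ℝ, 0 ≤ r → IsClosed {p : X × X | du p.1 p.2 ≤ r})
    (hd_bdd : ∀ x y : X, dist x y ≤ 1) (hdu_bdd : ∀ x y, du x y ≤ 1)
    (r : ℝ)
    (f h : unitInterval → X) (hf : Measurable f) (hh : Measurable h)
    (hfh : r < ∫ ω : unitInterval, du (f ω) (h ω)) :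
    ∃ ε > 0, ∀ f' h' : unitInterval → X, Measurable f' → Measurable h' →
      (∫ ω : unitInterval, dist (f ω) (f' ω)) < ε →
      (∫ ω : unitInterval, dist (h ω) (h' ω)) < ε →
      r < ∫ ω : unitInterval, du (f' ω) (h' ω) := by
  have hdu_nonneg : ∀ x y, 0 ≤ du x y := fun x y => dist_nonneg.trans (hdu_refines x y)
  have hdu_lower : LowerSemicontinuous fun p : X × X => du p.1 p.2 :=
    lowerSemicontinuous_of_isClosed_sublevel (fun p => hdu_nonneg p.1 p.2) hdu_lsc
  have hdu_int : ∀ {f' h' : unitInterval → X}, Measurable f' → Measurable h' →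
      Integrable (fun ω => du (f' ω) (h' ω)) :=
    hdu_lower.integrable_comp_prodMk (C := 1) fun p => by
      simpa [abs_of_nonneg (hdu_nonneg p.1 p.2)] using hdu_bdd p.1 p.2
  have tendstoInMeasure_of_lt : ∀ {F : ℕ → unitInterval → X} {f₀ : unitInterval → X},
      Measurable f₀ → (∀ n, Measurable (F n)) →
      (∀ n : ℕ, ∫ ω, dist (f₀ ω) (F n ω) < 1 / (n + 1)) → TendstoInMeasure volume F atTop f₀ := by
    intro F f₀ hf₀ hF hlt
    simp_rw [dist_comm (f₀ _)] at hlt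
    have hint : ∀ n, Integrable fun ω => dist (F n ω) (f₀ ω) := fun n =>
      continuous_dist.lowerSemicontinuous.integrable_comp_prodMk
        (φ := fun p : X × X => dist p.1 p.2) (C := 1)
        (fun p => by simpa using hd_bdd p.1 p.2) (hF n) hf₀
    refine tendstoInMeasure_of_tendsto_integral_dist hint ?_
    exact tendsto_of_tendsto_of_tendsto_of_le_of_le tendsto_const_nhds
      (tendsto_one_div_add_atTop_nhds_zero_nat (𝕜 := ℝ))
      (fun n => integral_nonneg fun _ => dist_nonneg) (fun n => (hlt n).le)
  by_contra! hcon
  choose F H hF hH hFf hHh hFH using fun n : ℕ => hcon (1 / (n + 1)) Nat.one_div_pos_of_nat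
  obtain ⟨ns, -, hae⟩ := ((tendstoInMeasure_of_lt hf hF hFf).prodMk
    (tendstoInMeasure_of_lt hh hH hHh)).exists_seq_tendsto_ae
  exact hfh.not_ge <| integral_le_of_tendsto_ae_of_lowerSemicontinuous hdu_lower
    (fun p => hdu_nonneg p.1 p.2) hae (fun n => hdu_int (hF _) (hH _)) (hdu_int hf hh)
    (.of_forall fun n => hFH _)

/-- With `(X, dist, dᵤ)` a topometric space (`dist` complete, both distances
bounded by `1`, `dᵤ` lower semicontinuous w.r.t. `dist`), the induced distance
`d̂ᵤ(f,h) = ∫ dᵤ(f ω, h ω)` on `L⁰([0,1],X)` is lower semicontinuous for the topology of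
`d̂(f,h) = ∫ dist(f ω, h ω)`: for every `r > 0`, the set `{(f,h) : d̂ᵤ(f,h) > r}` is open,
i.e. around each of its points there is a `d̂`-ball (in each coordinate) contained in it. -/
theorem stmt2 {X : Type*} [MetricSpace X] [CompleteSpace X]
    [MeasurableSpace X] [BorelSpace X]
    (du : X → X → ℝ)
    (hdu_self : ∀ x, du x x = 0) (hdu_pos : ∀ x y, x ≠ y → 0 < du x y)
    (hdu_comm : ∀ x y, du x y = du y x)
    (hdu_tri : ∀ x y z, du x z ≤ du x y + du y z)
    (hdu_refines : ∀ x y : X, dist x y ≤ du x y)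
    (hdu_lsc : ∀ r : ℝ, 0 ≤ r → IsClosed {p : X × X | du p.1 p.2 ≤ r})
    (hd_bdd : ∀ x y : X, dist x y ≤ 1) (hdu_bdd : ∀ x y, du x y ≤ 1)
    (r : ℝ) (hr : 0 < r)
    (f h : unitInterval → X) (hf : Measurable f) (hh : Measurable h)
    (hfh : r < ∫ ω : unitInterval, du (f ω) (h ω)) :
    ∃ ε > 0, ∀ f' h' : unitInterval → X, Measurable f' → Measurable h' →
      (∫ ω : unitInterval, dist (f ω) (f' ω)) < ε →
      (∫ ω : unitInterval, dist (h ω) (h' ω)) < ε →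
      r < ∫ ω : unitInterval, du (f' ω) (h' ω) :=
  stmt2_general du hdu_refines hdu_lsc hd_bdd hdu_bdd r f h hf hh hfh
end

section
/- Let (f,T) ∈ L⁰([0,1],S∞) ⋊ Aut([0,1]). Then the uniform distance from (f,T) to the identity equals μ({ω : f(ω) ≠ e} ∪ {ω : T(ω) ≠ ω}), where the uniform distance is L_u((f,T),(C_e,Id)) = sup over α ∈ L⁰([0,1],ℕ) of μ({ω : f(ω)(α(T⁻¹(ω))) ≠ α(ω)}). -/
/-!
The inequality `≤` is pointwise: where `f ω = 1` and `T ω = ω`, no `α` is moved at `ω`.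
For `≥`, colour the dyadic cells of level `m` by some `s` with `N + 1` colours and let `α ω` be the
colour of the cell of `ω` if `T ω ≠ ω`, and a point moved by `f ω` if `T ω = ω`. When `T⁻¹ ω` and
`ω` lie in different cells, `f ω (α (T⁻¹ ω)) = α ω` holds for only a `1 / (N + 1)` fraction of the
colourings `s`, so averaging over `s` gives one for which this happens on a set of measure at most
`μ univ / (N + 1)`. The remaining points, with `T⁻¹ ω ≠ ω` in the same cell as `ω`, form a
decreasing sequence of sets with empty intersection as `m → ∞`.
-/

open MeasureTheory

/-- The group `Aut([0,1])` of invertible Lebesgue-measure-preserving transformations. -/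
def MAut : Type := {T : unitInterval ≃ᵐ unitInterval // MeasurePreserving T volume volume}

/-- The Borel measurable structure on `S∞ = Perm ℕ` (from the Polish topology of pointwise
convergence of the permutation and its inverse). -/
noncomputable instance : MeasurableSpace (Equiv.Perm ℕ) :=
  MeasurableSpace.comap (fun σ => ((σ : ℕ → ℕ), (σ.symm : ℕ → ℕ))) inferInstance

open scoped ENNReal Finset

namespace Equiv.Perm

lemma measurable_apply (n : ℕ) : Measurable fun σ : Perm ℕ => σ n :=
  (measurable_pi_apply n).comp (measurable_fst.comp (comap_measurable _))

lemma measurableSet_eq_one : MeasurableSet {σ : Perm ℕ | σ = 1} := by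
  simp only [Perm.ext_iff, Set.ofPred_forall]
  exact .iInter fun n => measurableSet_eq_fun (measurable_apply n) measurable_const

lemma exists_eq_one_or_apply_ne (σ : Perm ℕ) : ∃ n, σ = 1 ∨ σ n ≠ n := by
  by_contra! h
  exact (h 0).1 (Perm.ext fun n => (h n).2)

open Classical in
noncomputable def leastMoved (σ : Perm ℕ) : ℕ := Nat.find σ.exists_eq_one_or_apply_ne

lemma apply_leastMoved_ne {σ : Perm ℕ} (h : σ ≠ 1) : σ σ.leastMoved ≠ σ.leastMoved := by
  classical
  exact (Nat.find_spec σ.exists_eq_one_or_apply_ne).resolve_left h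

lemma measurable_leastMoved : Measurable leastMoved := by
  classical
  exact measurable_find _ fun k =>
    measurableSet_eq_one.union (measurableSet_eq_fun (measurable_apply k) measurable_const).compl

end Equiv.Perm

lemma Measurable.perm_apply {Ω : Type*} [MeasurableSpace Ω] {f : Ω → Equiv.Perm ℕ} {g : Ω → ℕ}
    (hf : Measurable f) (hg : Measurable g) : Measurable fun ω => f ω (g ω) :=
  (measurable_from_prod_countable_left (f := fun p : Ω × ℕ => f p.1 p.2)
    fun n => (Equiv.Perm.measurable_apply n).comp hf).comp (measurable_id.prodMk hg)

noncomputable def dyadicCell (m : ℕ) (x : unitInterval) : Fin (2 ^ m + 1) :=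
  ⟨⌊(2 : ℝ) ^ m * x⌋₊, Nat.lt_succ_of_le <| Nat.floor_le_of_le <| by
    push_cast; exact mul_le_of_le_one_right (by positivity) x.2.2⟩

lemma measurable_dyadicCell (m : ℕ) : Measurable (dyadicCell m) := by
  refine measurable_to_countable' fun k => ?_
  have h : Measurable fun x : unitInterval => ⌊(2 : ℝ) ^ m * x⌋₊ :=
    (measurable_const.mul measurable_subtype_coe).nat_floor
  convert h (measurableSet_singleton (k : ℕ)) using 1
  ext x
  simp [dyadicCell, Fin.ext_iff]

lemma dyadicCell_eq_of_succ {m : ℕ} {x y : unitInterval}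
    (h : dyadicCell (m + 1) x = dyadicCell (m + 1) y) : dyadicCell m x = dyadicCell m y := by
  have key : ∀ z : unitInterval, (dyadicCell m z : ℕ) = dyadicCell (m + 1) z / 2 := fun z => by
    simp only [dyadicCell, ← Nat.floor_div_ofNat, pow_succ]
    congr 1
    ring
  exact Fin.ext <| by rw [key, key, h]

lemma eq_of_forall_dyadicCell_eq {x y : unitInterval} (h : ∀ m, dyadicCell m x = dyadicCell m y) :
    x = y := by
  have close : ∀ m : ℕ, |(x - y : ℝ)| * 2 ^ m < 1 := fun m => by
    have hm : ⌊(2 : ℝ) ^ m * x⌋ = ⌊(2 : ℝ) ^ m * y⌋ := by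
      rw [← Int.natCast_floor_eq_floor (mul_nonneg (by positivity) x.2.1),
        ← Int.natCast_floor_eq_floor (mul_nonneg (by positivity) y.2.1)]
      exact congrArg Nat.cast (congrArg Fin.val (h m))
    have := Int.abs_sub_lt_one_of_floor_eq_floor hm
    rwa [← mul_sub, abs_mul, abs_of_pos (by positivity), mul_comm] at this
  by_contra hne
  obtain ⟨m, hm⟩ := exists_pow_lt_of_lt_one
    (abs_pos.mpr (sub_ne_zero.mpr (Subtype.coe_injective.ne hne))) (by norm_num : (1 / 2 : ℝ) < 1)
  rw [one_div_pow, div_lt_iff₀ (by positivity)] at hm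
  linarith [close m]

open Filter Topology

lemma tendsto_measure_ne_and_dyadicCell_eq {X : Type*} [MeasurableSpace X] (μ : Measure X)
    [IsFiniteMeasure μ] {g h : X → unitInterval} (hg : Measurable g) (hh : Measurable h) :
    Tendsto (fun m => μ {x | g x ≠ h x ∧ dyadicCell m (g x) = dyadicCell m (h x)}) atTop (𝓝 0) := by
  set S := fun m => {x | g x ≠ h x ∧ dyadicCell m (g x) = dyadicCell m (h x)}
  have hS : ∀ m, NullMeasurableSet (S m) μ := fun m =>
    ((measurableSet_eq_fun hg hh).compl.inter (measurableSet_eq_fun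
      ((measurable_dyadicCell m).comp hg) ((measurable_dyadicCell m).comp hh))).nullMeasurableSet
  have hanti : Antitone S :=
    antitone_nat_of_succ_le fun m x hx => ⟨hx.1, dyadicCell_eq_of_succ hx.2⟩
  have hempty : ⋂ m, S m = ∅ := Set.eq_empty_of_forall_notMem fun x hx =>
    (Set.mem_iInter.1 hx 0).1 (eq_of_forall_dyadicCell_eq fun m => (Set.mem_iInter.1 hx m).2)
  have := tendsto_measure_iInter_atTop hS hanti ⟨0, measure_ne_top _ _⟩
  rwa [hempty, measure_empty] at this

lemma card_filter_apply_eq_apply_le {ι κ β : Type*} [Fintype ι] [DecidableEq ι] [Fintype κ]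
    [DecidableEq β] {i j : ι} (hij : i ≠ j) (φ : κ → β) {ψ : κ → β} (hψ : ψ.Injective) :
    #{s : ι → κ | φ (s i) = ψ (s j)} ≤ Fintype.card κ ^ (Fintype.card ι - 1) := by
  calc #{s : ι → κ | φ (s i) = ψ (s j)} ≤ #(Finset.univ : Finset ({x // x ≠ j} → κ)) :=
        Finset.card_le_card_of_injOn (fun s x => s x) (fun _ _ => Finset.mem_univ _)
          fun s hs t ht hst => funext fun x => by
            by_cases hx : x = j
            · simp only [Finset.coe_filter, Finset.mem_univ, true_and, Set.mem_ofPred_eq] at hs ht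
              rw [hx]
              exact hψ (by rw [← hs, ← ht]; exact congrArg φ (congrFun hst ⟨i, hij⟩))
            · exact congrFun hst ⟨x, hx⟩
    _ = _ := by simp [Fintype.card_subtype_compl]

open Classical in
lemma exists_card_mul_measure_le {α ι : Type*} [MeasurableSpace α] (μ : Measure α) [Fintype ι]
    [Nonempty ι] {F : ι → Set α} (hF : ∀ i, MeasurableSet (F i)) {c : ℕ}
    (hc : ∀ x, #{i | x ∈ F i} ≤ c) : ∃ i, Fintype.card ι * μ (F i) ≤ c * μ Set.univ := by
  have hsum : ∑ i, μ (F i) ≤ c * μ Set.univ := calc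
    ∑ i, μ (F i) = ∫⁻ x, ∑ i, (F i).indicator 1 x ∂μ := by
        rw [lintegral_finsetSum _ fun i _ => measurable_one.indicator (hF i)]
        simp [lintegral_indicator_one (hF _)]
    _ = ∫⁻ x, (#{i | x ∈ F i} : ℝ≥0∞) ∂μ := by
        congr 1; ext x; simp [Set.indicator_apply, Finset.sum_boole]
    _ ≤ ∫⁻ _, (c : ℝ≥0∞) ∂μ := lintegral_mono fun x => Nat.cast_le.mpr (by convert hc x)
    _ = c * μ Set.univ := lintegral_const _
  obtain ⟨i, -, hi⟩ := ENNReal.exists_le_of_sum_le Finset.univ_nonempty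
    (f := fun i => Fintype.card ι * μ (F i)) (g := fun _ => c * μ Set.univ) (by
      rw [← Finset.mul_sum, Finset.sum_const, nsmul_eq_mul, Finset.card_univ]
      gcongr)
  exact ⟨i, hi⟩

noncomputable def uniformDistToOne {Ω : Type*} [MeasurableSpace Ω] (μ : Measure Ω)
    (f : Ω → Equiv.Perm ℕ) (T : Ω ≃ᵐ Ω) : ℝ≥0∞ :=
  ⨆ α : {a : Ω → ℕ // Measurable a}, μ {ω | f ω (α.1 (T.symm ω)) ≠ α.1 ω}

lemma uniformDistToOne_le {Ω : Type*} [MeasurableSpace Ω] (μ : Measure Ω)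
    (f : Ω → Equiv.Perm ℕ) (T : Ω ≃ᵐ Ω) :
    uniformDistToOne μ f T ≤ μ ({ω | f ω ≠ 1} ∪ {ω | T ω ≠ ω}) :=
  iSup_le fun α => measure_mono fun ω hω => by
    by_contra h
    simp only [Set.mem_union, Set.mem_ofPred_eq, not_or, not_not] at h
    have hsymm : T.symm ω = ω := T.symm_apply_eq.2 h.2.symm
    exact hω (by rw [hsymm, h.1]; rfl)

section CellColoring

variable {μ : Measure unitInterval} {f : unitInterval → Equiv.Perm ℕ}
  {T : unitInterval ≃ᵐ unitInterval}

variable (f T) in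
noncomputable def cellColoring (m N : ℕ) (s : Fin (2 ^ m + 1) → Fin (N + 1)) (ω : unitInterval) :
    ℕ :=
  if T ω = ω then (f ω).leastMoved else s (dyadicCell m ω)

lemma measurable_cellColoring (hf : Measurable f) (m N : ℕ) (s : Fin (2 ^ m + 1) → Fin (N + 1)) :
    Measurable (cellColoring f T m N s) :=
  Measurable.ite (measurableSet_eq_fun T.measurable measurable_id)
    (Equiv.Perm.measurable_leastMoved.comp hf)
    ((measurable_from_top (f := fun c => (s c : ℕ))).comp (measurable_dyadicCell m))

lemma apply_cellColoring_ne_of_apply_eq_self {m N : ℕ} (s : Fin (2 ^ m + 1) → Fin (N + 1))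
    {ω : unitInterval} (hT : T ω = ω) (hf : f ω ≠ 1) :
    f ω (cellColoring f T m N s (T.symm ω)) ≠ cellColoring f T m N s ω := by
  rw [T.symm_apply_eq.2 hT.symm, cellColoring, if_pos hT]
  exact Equiv.Perm.apply_leastMoved_ne hf

lemma card_cellColoring_apply_eq_le {m N : ℕ} {ω : unitInterval} (hT : T.symm ω ≠ ω)
    (hcell : dyadicCell m (T.symm ω) ≠ dyadicCell m ω) :
    #{s : Fin (2 ^ m + 1) → Fin (N + 1) |
      f ω (cellColoring f T m N s (T.symm ω)) = cellColoring f T m N s ω} ≤ (N + 1) ^ 2 ^ m := by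
  have hT' : T ω ≠ ω := fun h => hT (T.symm_apply_eq.2 h.symm)
  have := card_filter_apply_eq_apply_le (κ := Fin (N + 1)) hcell (fun c => f ω c) Fin.val_injective
  simpa [cellColoring, hT', hT.symm] using this

lemma exists_cellColoring_mul_measure_le (hf : Measurable f) (m N : ℕ) :
    ∃ s : Fin (2 ^ m + 1) → Fin (N + 1), (N + 1) * μ {ω | T.symm ω ≠ ω ∧
      dyadicCell m (T.symm ω) ≠ dyadicCell m ω ∧
      f ω (cellColoring f T m N s (T.symm ω)) = cellColoring f T m N s ω} ≤ μ Set.univ := by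
  have hα := measurable_cellColoring (T := T) hf m N
  have hcell := measurable_dyadicCell m
  obtain ⟨s, hs⟩ := exists_card_mul_measure_le μ (c := (N + 1) ^ 2 ^ m)
    (F := fun s => {ω | T.symm ω ≠ ω ∧ dyadicCell m (T.symm ω) ≠ dyadicCell m ω ∧
      f ω (cellColoring f T m N s (T.symm ω)) = cellColoring f T m N s ω})
    (fun s => (measurableSet_eq_fun T.symm.measurable measurable_id).compl.inter
      ((measurableSet_eq_fun (hcell.comp T.symm.measurable) hcell).compl.inter
        (measurableSet_eq_fun (hf.perm_apply ((hα s).comp T.symm.measurable)) (hα s))))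
    fun ω => by
      by_cases h : T.symm ω ≠ ω ∧ dyadicCell m (T.symm ω) ≠ dyadicCell m ω
      · refine (Finset.card_le_card fun s hs => ?_).trans
          (card_cellColoring_apply_eq_le (f := f) h.1 h.2)
        simp only [Finset.mem_filter, Finset.mem_univ, true_and, Set.mem_ofPred_eq] at hs ⊢
        exact hs.2.2
      · refine (Finset.card_eq_zero.mpr (Finset.eq_empty_of_forall_notMem fun s hs => ?_)).trans_le
          (Nat.zero_le _)
        simp only [Finset.mem_filter, Finset.mem_univ, true_and, Set.mem_ofPred_eq] at hs
        exact h ⟨hs.1, hs.2.1⟩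
  refine ⟨s, (ENNReal.mul_le_mul_iff_right (a := ((N + 1 : ℕ) : ℝ≥0∞) ^ 2 ^ m)
    (by positivity) (by simp)).mp ?_⟩
  simpa [← mul_assoc, ← pow_succ] using hs

lemma measure_union_le_uniformDistToOne_add (hf : Measurable f) (m N : ℕ) :
    μ ({ω | f ω ≠ 1} ∪ {ω | T ω ≠ ω}) ≤ uniformDistToOne μ f T +
      μ {ω | T.symm ω ≠ ω ∧ dyadicCell m (T.symm ω) = dyadicCell m ω} + μ Set.univ / (N + 1) := by
  obtain ⟨s, hs⟩ := exists_cellColoring_mul_measure_le (μ := μ) (T := T) hf m N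
  set α := cellColoring f T m N s
  set bad := {ω | f ω (α (T.symm ω)) ≠ α ω}
  set sameCell := {ω | T.symm ω ≠ ω ∧ dyadicCell m (T.symm ω) = dyadicCell m ω}
  set good := {ω | T.symm ω ≠ ω ∧ dyadicCell m (T.symm ω) ≠ dyadicCell m ω ∧
    f ω (α (T.symm ω)) = α ω}
  have hcover : {ω | f ω ≠ 1} ∪ {ω | T ω ≠ ω} ⊆ bad ∪ sameCell ∪ good := by
    intro ω hω
    by_cases hfix : T ω = ω
    · exact .inl (.inl (apply_cellColoring_ne_of_apply_eq_self s hfix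
        (hω.resolve_right (not_not.2 hfix))))
    have hsymm : T.symm ω ≠ ω := fun h => hfix (T.symm_apply_eq.1 h).symm
    by_cases hcell : dyadicCell m (T.symm ω) = dyadicCell m ω
    · exact .inl (.inr ⟨hsymm, hcell⟩)
    by_cases hgood : f ω (α (T.symm ω)) = α ω
    · exact .inr ⟨hsymm, hcell, hgood⟩
    · exact .inl (.inl hgood)
  calc μ ({ω | f ω ≠ 1} ∪ {ω | T ω ≠ ω}) ≤ μ (bad ∪ sameCell ∪ good) := measure_mono hcover
    _ ≤ μ (bad ∪ sameCell) + μ good := measure_union_le _ _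
    _ ≤ μ bad + μ sameCell + μ good := by gcongr; exact measure_union_le _ _
    _ ≤ _ := by
      gcongr
      · exact le_iSup_of_le (⟨α, measurable_cellColoring hf m N s⟩ :
          {a : unitInterval → ℕ // Measurable a}) le_rfl
      · rw [ENNReal.le_div_iff_mul_le (by simp) (by simp), mul_comm]
        exact_mod_cast hs

lemma measure_union_le_uniformDistToOne [IsFiniteMeasure μ] (hf : Measurable f) :
    μ ({ω | f ω ≠ 1} ∪ {ω | T ω ≠ ω}) ≤ uniformDistToOne μ f T := by
  have hcell := tendsto_measure_ne_and_dyadicCell_eq μ T.symm.measurable measurable_id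
  have hcolors : Tendsto (fun N : ℕ => μ Set.univ / (N + 1)) atTop (𝓝 0) := by
    have := ENNReal.Tendsto.const_div (a := μ Set.univ)
      (ENNReal.tendsto_nat_nhds_top.comp (tendsto_add_atTop_nat 1)) (.inr (measure_ne_top _ _))
    simpa using this
  refine ge_of_tendsto' (by simpa using hcolors.const_add (uniformDistToOne μ f T)) fun N => ?_
  refine ge_of_tendsto' (by simpa using (hcell.const_add _).add_const (μ Set.univ / (N + 1)))
    fun m => ?_
  exact measure_union_le_uniformDistToOne_add hf m N

end CellColoring

/-- For `(f,T) ∈ L⁰([0,1],S∞) ⋊ Aut([0,1])` acting on `L⁰([0,1],ℕ)` by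
`((f,T)α)(ω) = f(ω)(α(T⁻¹ ω))`, the uniform distance to the identity
`L_u((f,T),(C_e,Id)) = sup_{α ∈ L⁰([0,1],ℕ)} μ{ω : f(ω)(α(T⁻¹ ω)) ≠ α(ω)}`
equals `μ({ω : f(ω) ≠ e} ∪ {ω : T(ω) ≠ ω})`. -/
theorem stmt8 (f : unitInterval → Equiv.Perm ℕ) (hf : Measurable f) (T : MAut) :
    (⨆ α : {a : unitInterval → ℕ // Measurable a},
        volume {ω : unitInterval | f ω (α.1 (T.1.symm ω)) ≠ α.1 ω}) =
      volume ({ω : unitInterval | f ω ≠ 1} ∪ {ω : unitInterval | T.1 ω ≠ ω}) :=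
  (uniformDistToOne_le volume f T.1).antisymm (measure_union_le_uniformDistToOne hf)
end

section
/- Let (X,d) be a Polish metric space with diameter ≤ 1 containing two points at distance r > 0, G = Isom(X,d), and G̃ = L⁰([0,1],G) ⋊ Aut([0,1]). For (f,T) ∈ G̃, set A = {ω : f(ω) ≠ e ∧ T(ω) = ω} and B = {ω : T(ω) ≠ ω}. Then (r/8)·μ(B) + ∫_A d_u(f(ω),e) dμ ≤ L_u((f,T),(C_e,Id)) ≤ μ(B) + ∫_A d_u(f(ω),e) dμ. -/
open MeasureTheory

/-- The Borel measurable structure on the isometry group of `X`. -/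
noncomputable instance isomMeasurableSpace (X : Type*) [MetricSpace X] [MeasurableSpace X] :
    MeasurableSpace (X ≃ᵢ X) :=
  MeasurableSpace.comap (fun g => ((g : X → X), (g.symm : X → X))) inferInstance

open Set Function Filter Topology

/-!
Let `F` be the fixed-point set of `T` and `B = Fᶜ`. Since `T⁻¹` preserves `F`, the integrand
`d(f(ω) α(T⁻¹ω), α(ω))` equals `d(f(ω) α(ω), α(ω)) ≤ d_u(f(ω), e)` on `F` and is at most `1`
on `B`, which gives the upper bound. Conversely, on `F` a measurable `ε`-maximiser of
`x ↦ d(f(ω) x, x)` along a dense sequence makes the integrand `ε`-close to `d_u(f(ω), e)`.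
On `B` we use a measurable colouring `c : Ω → ℕ` with `c(T⁻¹ω) ≠ c(ω)`, built from a measurable
injection of `Ω` into Cantor space, and label colours by `x₀` or `y₀`. As
`d(z, x₀) + d(z, y₀) ≥ r`, the labellings of the first `N` colours gain `r/2` on average at every
point whose two colours are among them, and for large `N` these points fill half of `B`.
-/

namespace IsometryEquiv

variable {X : Type*} [MetricSpace X]

noncomputable def supDisplacement (g : X ≃ᵢ X) : ℝ := ⨆ x, dist (g x) x

lemma supDisplacement_nonneg (g : X ≃ᵢ X) : 0 ≤ g.supDisplacement :=
  Real.iSup_nonneg fun _ => dist_nonneg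

@[simp]
lemma supDisplacement_refl : (IsometryEquiv.refl X).supDisplacement = 0 := by
  simp [supDisplacement, show ∀ x, IsometryEquiv.refl X x = x from fun _ => rfl]

section Bounded

variable (hX : ∀ x y : X, dist x y ≤ 1)
include hX

lemma bddAbove_range_dist_apply (g : X ≃ᵢ X) : BddAbove (range fun x => dist (g x) x) :=
  ⟨1, by rintro _ ⟨x, rfl⟩; exact hX _ _⟩

lemma dist_apply_le_supDisplacement (g : X ≃ᵢ X) (x : X) : dist (g x) x ≤ g.supDisplacement :=
  le_ciSup (bddAbove_range_dist_apply hX g) x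

lemma supDisplacement_le_one (g : X ≃ᵢ X) : g.supDisplacement ≤ 1 :=
  Real.iSup_le (fun _ => hX _ _) zero_le_one

lemma supDisplacement_eq_iSup_of_dense {s : Set X} (hs : Dense s) (g : X ≃ᵢ X) :
    g.supDisplacement = ⨆ x : s, dist (g x) x :=
  (hs.ciSup (by fun_prop) (bddAbove_range_dist_apply hX g)).symm

end Bounded

variable [MeasurableSpace X]

lemma measurable_apply (x : X) : Measurable fun g : X ≃ᵢ X => g x :=
  (measurable_pi_apply x).comp (measurable_fst.comp (measurable_iff_comap_le.mpr le_rfl))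

lemma measurable_eval [BorelSpace X] [SecondCountableTopology X] :
    Measurable fun p : (X ≃ᵢ X) × X => p.1 p.2 :=
  (measurable_uncurry_of_continuous_of_measurable (u := fun (x : X) (g : X ≃ᵢ X) => g x)
    (fun g => g.continuous) measurable_apply).comp measurable_swap

lemma measurable_supDisplacement [BorelSpace X] [SecondCountableTopology X]
    (hX : ∀ x y : X, dist x y ≤ 1) : Measurable (supDisplacement : (X ≃ᵢ X) → ℝ) := by
  obtain ⟨s, hs, hsd⟩ := TopologicalSpace.exists_countable_dense X
  have : Countable s := hs.to_subtype
  simp_rw [funext (supDisplacement_eq_iSup_of_dense hX hsd)]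
  exact Measurable.iSup fun x => (measurable_apply (x : X)).dist measurable_const

end IsometryEquiv

lemma sum_half_le_sum_pi_bool {ι : Type*} [Fintype ι] [DecidableEq ι] {p q : ι} (hpq : p ≠ q)
    {r : ℝ} (g : Bool → Bool → ℝ) (hg : ∀ a, r ≤ g a true + g a false) :
    ∑ _σ : ι → Bool, r / 2 ≤ ∑ σ : ι → Bool, g (σ p) (σ q) := by
  -- flipping the `q`-th bit is a bijection of `ι → Bool` that does not move the `p`-th bit
  let flip : (ι → Bool) ≃ (ι → Bool) :=
    Involutive.toPerm (fun σ => update σ q (!σ q)) fun σ => by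
      ext j; by_cases hj : j = q <;> simp [hj]
  have hflip : ∑ σ : ι → Bool, g (σ p) (σ q) = ∑ σ : ι → Bool, g (σ p) (!σ q) := by
    refine (flip.sum_comp fun σ => g (σ p) (σ q)).symm.trans (Finset.sum_congr rfl fun σ _ => ?_)
    change g (update σ q (!σ q) p) (update σ q (!σ q) q) = _
    rw [update_of_ne hpq, update_self]
  have hpair : ∀ σ : ι → Bool, r ≤ g (σ p) (σ q) + g (σ p) (!σ q) := fun σ => by
    cases σ q <;> simp only [Bool.not_true, Bool.not_false] <;> linarith [hg (σ p)]
  have := Finset.sum_le_sum fun σ (_ : σ ∈ Finset.univ) => hpair σ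
  rw [Finset.sum_add_distrib, ← hflip] at this
  rw [← Finset.sum_div]
  linarith

section Measure

variable {Ω : Type*} [MeasurableSpace Ω] {μ : Measure Ω}

lemma exists_mul_measureReal_le_setIntegral [IsFiniteMeasure μ] {ι : Type*} [Fintype ι]
    [Nonempty ι] {S : Set Ω} (hS : MeasurableSet S) {F : ι → Ω → ℝ}
    (hF : ∀ i, IntegrableOn (F i) S μ) {a : ℝ} (ha : ∀ ω ∈ S, ∑ _i : ι, a ≤ ∑ i, F i ω) :
    ∃ i, a * μ.real S ≤ ∫ ω in S, F i ω ∂μ := by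
  suffices ∑ _i : ι, a * μ.real S ≤ ∑ i, ∫ ω in S, F i ω ∂μ by
    simpa using Finset.exists_le_of_sum_le Finset.univ_nonempty this
  calc ∑ _i : ι, a * μ.real S = ∫ ω in S, ∑ _i : ι, a ∂μ := by
        simp only [Finset.sum_const, nsmul_eq_mul, setIntegral_const, smul_eq_mul]
        ring
    _ ≤ ∫ ω in S, ∑ i, F i ω ∂μ :=
        setIntegral_mono_on integrableOn_const
          (integrable_finsetSum _ fun i _ => hF i) hS ha
    _ = ∑ i, ∫ ω in S, F i ω ∂μ := integral_finsetSum _ fun i _ => hF i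

lemma exists_measureReal_le_two_mul [IsFiniteMeasure μ] {S : ℕ → Set Ω} (hS : Monotone S) :
    ∃ N, μ.real (⋃ n, S n) ≤ 2 * μ.real (S N) := by
  rcases (measureReal_nonneg : 0 ≤ μ.real (⋃ n, S n)).eq_or_lt with h | h
  · exact ⟨0, by rw [← h]; positivity⟩
  have hlim : Tendsto (fun N => μ.real (S N)) atTop (𝓝 (μ.real (⋃ n, S n))) :=
    (ENNReal.tendsto_toReal (measure_ne_top _ _)).comp (tendsto_measure_iUnion_atTop hS)
  obtain ⟨N, hN⟩ := (hlim.eventually (eventually_gt_nhds (half_lt_self h))).exists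
  exact ⟨N, by linarith⟩

end Measure

section Coloring

variable {Ω : Type*} [MeasurableSpace Ω] [MeasurableSpace.CountablySeparated Ω]

lemma measurableSet_fixedPoints {T : Ω → Ω} (hT : Measurable T) :
    MeasurableSet (fixedPoints T) := by
  obtain ⟨φ, hφ, hφi⟩ := MeasurableSpace.measurable_injection_nat_bool_of_countablySeparated Ω
  have : fixedPoints T = {ω | φ (T ω) = φ ω} := by ext ω; exact hφi.eq_iff.symm
  rw [this]
  exact measurableSet_eq_fun (hφ.comp hT) hφ

lemma exists_measurable_coloring {T : Ω → Ω} (hT : Measurable T) :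
    ∃ c : Ω → ℕ, Measurable c ∧ ∀ ω, T ω ≠ ω → c (T ω) ≠ c ω := by
  classical
  obtain ⟨φ, hφ, hφi⟩ := MeasurableSpace.measurable_injection_nat_bool_of_countablySeparated Ω
  have hdiff : ∀ ω, ∃ n, φ (T ω) n ≠ φ ω n ∨ φ (T ω) = φ ω := fun ω => by
    by_cases h : φ (T ω) = φ ω
    · exact ⟨0, Or.inr h⟩
    · obtain ⟨n, hn⟩ := Function.ne_iff.mp h
      exact ⟨n, Or.inl hn⟩
  -- the colour of `ω` encodes the first index `n` where the codes of `ω` and `T ω` differ,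
  -- together with the bit `φ ω n`; the colour of `T ω` can only share `n` with it, not the bit
  refine ⟨fun ω => Nat.bit (φ ω (Nat.find (hdiff ω))) (Nat.find (hdiff ω)), ?_, ?_⟩
  · refine Measurable.find (f := fun n ω => Nat.bit (φ ω n) n) (fun n => ?_) (fun n => ?_) hdiff
    · exact (measurable_of_countable (Nat.bit · n)).comp ((measurable_pi_apply n).comp hφ)
    have hn := (measurable_pi_apply n).comp (hφ.comp hT)
    exact (measurableSet_eq_fun hn ((measurable_pi_apply n).comp hφ)).compl.union
      (measurableSet_eq_fun (hφ.comp hT) hφ)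
  · intro ω hω heq
    set n := Nat.find (hdiff ω)
    have hn : φ (T ω) n ≠ φ ω n := (Nat.find_spec (hdiff ω)).resolve_right (hφi.ne hω)
    have hk : Nat.find (hdiff (T ω)) = n := by simpa using congrArg Nat.div2 heq
    have hb : φ (T ω) (Nat.find (hdiff (T ω))) = φ ω n := by simpa using congrArg Nat.bodd heq
    exact hn (hk ▸ hb)

end Coloring

section SemidirectAction

variable {Ω X : Type*} [MeasurableSpace Ω] {μ : Measure Ω} [MetricSpace X]
  (f : Ω → X ≃ᵢ X) (T : Ω ≃ᵐ Ω)

/-- The action of `(f, T) ∈ L⁰(Ω, Isom X) ⋊ Aut(Ω)` on `L⁰(Ω, X)`. -/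
def semidirectAct (α : Ω → X) : Ω → X := fun ω => f ω (α (T.symm ω))

lemma MeasurableEquiv.symm_apply_mem_fixedPoints_iff {ω : Ω} :
    T.symm ω ∈ fixedPoints T ↔ ω ∈ fixedPoints T := by
  rw [mem_fixedPoints, IsFixedPt, T.apply_symm_apply, eq_comm, T.symm_apply_eq, eq_comm]
  rfl

variable {f T}

lemma semidirectAct_of_mem_fixedPoints {ω : Ω} (hω : ω ∈ fixedPoints T) (α : Ω → X) :
    semidirectAct f T α ω = f ω (α ω) := by
  rw [semidirectAct, T.symm_apply_eq.mpr hω.symm]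

variable [MeasurableSpace X] [BorelSpace X] [SecondCountableTopology X]

lemma measurable_semidirectAct (hf : Measurable f) {α : Ω → X} (hα : Measurable α) :
    Measurable (semidirectAct f T α) :=
  IsometryEquiv.measurable_eval.comp (hf.prodMk (hα.comp T.symm.measurable))

variable [IsFiniteMeasure μ] (hX : ∀ x y : X, dist x y ≤ 1)
include hX

lemma integrable_dist_semidirectAct (hf : Measurable f) {α : Ω → X} (hα : Measurable α) :
    Integrable (fun ω => dist (semidirectAct f T α ω) (α ω)) μ :=
  .of_bound ((measurable_semidirectAct hf hα).dist hα).aestronglyMeasurable 1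
    (ae_of_all _ fun _ => by rw [Real.norm_of_nonneg dist_nonneg]; exact hX _ _)

lemma integrable_supDisplacement (hf : Measurable f) :
    Integrable (fun ω => (f ω).supDisplacement) μ :=
  .of_bound ((IsometryEquiv.measurable_supDisplacement hX).comp hf).aestronglyMeasurable 1
    (ae_of_all _ fun ω => by
      rw [Real.norm_of_nonneg (f ω).supDisplacement_nonneg]
      exact (f ω).supDisplacement_le_one hX)

lemma exists_measurable_supDisplacement_lt [Nonempty X] (hf : Measurable f) {ε : ℝ}
    (hε : 0 < ε) :
    ∃ β : Ω → X, Measurable β ∧ ∀ ω, (f ω).supDisplacement < dist (f ω (β ω)) (β ω) + ε := by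
  classical
  let D := TopologicalSpace.denseSeq X
  have hex : ∀ ω, ∃ k, (f ω).supDisplacement < dist (f ω (D k)) (D k) + ε := fun ω => by
    have : (f ω).supDisplacement - ε < ⨆ x : range D, dist (f ω x) x := by
      rw [← (f ω).supDisplacement_eq_iSup_of_dense hX (TopologicalSpace.denseRange_denseSeq X)]
      linarith
    obtain ⟨⟨_, k, rfl⟩, hk⟩ := exists_lt_of_lt_ciSup this
    exact ⟨k, by linarith⟩
  refine ⟨fun ω => D (Nat.find (hex ω)), ?_, fun ω => Nat.find_spec (hex ω)⟩
  refine Measurable.find (f := fun k _ => D k) (fun _ => measurable_const) (fun k => ?_) hex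
  exact measurableSet_lt ((IsometryEquiv.measurable_supDisplacement hX).comp hf)
    ((((IsometryEquiv.measurable_apply _).comp hf).dist measurable_const).add_const ε)

lemma exists_measurable_half_mul_measureReal_le_setIntegral (hf : Measurable f) (x₀ y₀ : X)
    {c : Ω → ℕ} (hc : Measurable c) (N : ℕ) {S : Set Ω} (hS : MeasurableSet S)
    (hcS : ∀ ω ∈ S, c (T.symm ω) ≤ N ∧ c ω ≤ N ∧ c (T.symm ω) ≠ c ω) :
    ∃ α : Ω → X, Measurable α ∧
      dist x₀ y₀ / 2 * μ.real S ≤ ∫ ω in S, dist (semidirectAct f T α ω) (α ω) ∂μ := by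
  classical
  let label : (Fin (N + 1) → Bool) → Ω → X := fun σ ω =>
    bif σ (Fin.clamp (c ω) N) then x₀ else y₀
  have hlabel : ∀ σ, Measurable (label σ) := fun σ =>
    (measurable_of_countable fun n => bif σ (Fin.clamp n N) then x₀ else y₀).comp hc
  obtain ⟨σ, hσ⟩ := exists_mul_measureReal_le_setIntegral (μ := μ) hS
    (F := fun σ ω => dist (semidirectAct f T (label σ) ω) (label σ ω))
    (fun σ => (integrable_dist_semidirectAct hX hf (hlabel σ)).integrableOn) fun ω hω => by
      obtain ⟨hp, hq, hpq⟩ := hcS ω hω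
      have hclamp : Fin.clamp (c (T.symm ω)) N ≠ Fin.clamp (c ω) N := by
        simpa [Fin.clamp, Fin.ext_iff, min_eq_left hp, min_eq_left hq] using hpq
      exact sum_half_le_sum_pi_bool hclamp
        (fun a b => dist (f ω (bif a then x₀ else y₀)) (bif b then x₀ else y₀))
        fun a => dist_triangle_left x₀ y₀ _
  exact ⟨label σ, hlabel σ, hσ⟩

variable [MeasurableSpace.CountablySeparated Ω]

theorem integral_dist_semidirectAct_le (hf : Measurable f) {α : Ω → X} (hα : Measurable α) :
    ∫ ω, dist (semidirectAct f T α ω) (α ω) ∂μ ≤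
      μ.real (fixedPoints T)ᶜ + ∫ ω in fixedPoints T, (f ω).supDisplacement ∂μ := by
  have hint := integrable_dist_semidirectAct (μ := μ) (T := T) hX hf hα
  rw [← integral_add_compl (measurableSet_fixedPoints T.measurable) hint, add_comm]
  refine add_le_add ?_ ?_
  · calc ∫ ω in (fixedPoints T)ᶜ, dist (semidirectAct f T α ω) (α ω) ∂μ
        ≤ ∫ _ in (fixedPoints T)ᶜ, 1 ∂μ :=
          setIntegral_mono hint.integrableOn integrableOn_const fun _ => hX _ _
      _ = μ.real (fixedPoints T)ᶜ := by simp
  · refine setIntegral_mono_on hint.integrableOn (integrable_supDisplacement hX hf).integrableOn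
      (measurableSet_fixedPoints T.measurable) fun ω hω => ?_
    rw [semidirectAct_of_mem_fixedPoints hω]
    exact (f ω).dist_apply_le_supDisplacement hX _

lemma integral_dist_semidirectAct_piecewise [DecidablePred (· ∈ fixedPoints T)]
    (hf : Measurable f) {β γ : Ω → X} (hβ : Measurable β) (hγ : Measurable γ) :
    ∫ ω, dist (semidirectAct f T ((fixedPoints T).piecewise β γ) ω)
        ((fixedPoints T).piecewise β γ ω) ∂μ =
      ∫ ω in fixedPoints T, dist (semidirectAct f T β ω) (β ω) ∂μ +
        ∫ ω in (fixedPoints T)ᶜ, dist (semidirectAct f T γ ω) (γ ω) ∂μ := by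
  have hFix := measurableSet_fixedPoints T.measurable
  rw [← integral_add_compl hFix (integrable_dist_semidirectAct hX hf (hβ.piecewise hFix hγ))]
  congr 1
  · refine setIntegral_congr_fun hFix fun ω hω => ?_
    simp only [semidirectAct_of_mem_fixedPoints hω, piecewise_eq_of_mem _ _ _ hω]
  · refine setIntegral_congr_fun hFix.compl fun ω hω => ?_
    have hω' : T.symm ω ∉ fixedPoints T := T.symm_apply_mem_fixedPoints_iff.not.mpr hω
    simp only [semidirectAct, piecewise_eq_of_notMem _ _ _ hω, piecewise_eq_of_notMem _ _ _ hω']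

theorem exists_measurable_quarter_mul_measureReal_le_setIntegral (hf : Measurable f)
    (x₀ y₀ : X) :
    ∃ α : Ω → X, Measurable α ∧ dist x₀ y₀ / 4 * μ.real (fixedPoints T)ᶜ ≤
      ∫ ω in (fixedPoints T)ᶜ, dist (semidirectAct f T α ω) (α ω) ∂μ := by
  obtain ⟨c, hc, hcT⟩ := exists_measurable_coloring T.symm.measurable
  let S : ℕ → Set Ω := fun N => (fixedPoints T)ᶜ ∩ {ω | c (T.symm ω) ≤ N ∧ c ω ≤ N}
  have hS : ∀ N, MeasurableSet (S N) := fun N =>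
    (measurableSet_fixedPoints T.measurable).compl.inter
      ((measurableSet_le (hc.comp T.symm.measurable) measurable_const).inter
        (measurableSet_le hc measurable_const))
  have hSmono : Monotone S := fun N M hNM ω ⟨hω, hp, hq⟩ => ⟨hω, hp.trans hNM, hq.trans hNM⟩
  have hSunion : ⋃ N, S N = (fixedPoints T)ᶜ :=
    (iUnion_subset fun N => inter_subset_left).antisymm fun ω hω =>
      mem_iUnion.mpr ⟨max (c (T.symm ω)) (c ω), hω, le_max_left _ _, le_max_right _ _⟩
  obtain ⟨N, hN⟩ := exists_measureReal_le_two_mul (μ := μ) hSmono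
  rw [hSunion] at hN
  obtain ⟨α, hα, hαS⟩ := exists_measurable_half_mul_measureReal_le_setIntegral (μ := μ) hX hf
    x₀ y₀ hc N (hS N) fun ω ⟨hω, hp, hq⟩ => ⟨hp, hq, hcT ω fun h => hω (T.symm_apply_eq.mp h).symm⟩
  refine ⟨α, hα, ?_⟩
  calc dist x₀ y₀ / 4 * μ.real (fixedPoints T)ᶜ ≤ dist x₀ y₀ / 2 * μ.real (S N) := by
        nlinarith [dist_nonneg (x := x₀) (y := y₀)]
    _ ≤ ∫ ω in S N, dist (semidirectAct f T α ω) (α ω) ∂μ := hαS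
    _ ≤ ∫ ω in (fixedPoints T)ᶜ, dist (semidirectAct f T α ω) (α ω) ∂μ :=
        setIntegral_mono_set (integrable_dist_semidirectAct hX hf hα).integrableOn
          (ae_of_all _ fun _ => dist_nonneg) inter_subset_left.eventuallyLE

theorem quarter_mul_add_setIntegral_supDisplacement_le_iSup [IsProbabilityMeasure μ]
    (hf : Measurable f) (x₀ y₀ : X) :
    dist x₀ y₀ / 4 * μ.real (fixedPoints T)ᶜ + ∫ ω in fixedPoints T, (f ω).supDisplacement ∂μ ≤
      ⨆ α : {a : Ω → X // Measurable a}, ∫ ω, dist (semidirectAct f T α.1 ω) (α.1 ω) ∂μ := by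
  classical
  have : Nonempty X := ⟨x₀⟩
  have hFix := measurableSet_fixedPoints T.measurable
  have hbdd : BddAbove (range fun α : {a : Ω → X // Measurable a} =>
      ∫ ω, dist (semidirectAct f T α.1 ω) (α.1 ω) ∂μ) :=
    ⟨_, forall_mem_range.2 fun α => integral_dist_semidirectAct_le hX hf α.2⟩
  refine le_of_forall_pos_le_add fun ε hε => ?_
  obtain ⟨γ, hγ, hγB⟩ :=
    exists_measurable_quarter_mul_measureReal_le_setIntegral (μ := μ) hX hf x₀ y₀
  obtain ⟨β, hβ, hβε⟩ := exists_measurable_supDisplacement_lt hX hf hε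
  have hfixed : ∫ ω in fixedPoints T, (f ω).supDisplacement ∂μ ≤
      ∫ ω in fixedPoints T, dist (semidirectAct f T β ω) (β ω) ∂μ + ε :=
    calc ∫ ω in fixedPoints T, (f ω).supDisplacement ∂μ
        ≤ ∫ ω in fixedPoints T, (dist (semidirectAct f T β ω) (β ω) + ε) ∂μ := by
          refine setIntegral_mono_on (integrable_supDisplacement hX hf).integrableOn
            ((integrable_dist_semidirectAct hX hf hβ).add (integrable_const ε)).integrableOn hFix
            fun ω hω => ?_
          rw [semidirectAct_of_mem_fixedPoints hω]
          exact (hβε ω).le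
      _ = ∫ ω in fixedPoints T, dist (semidirectAct f T β ω) (β ω) ∂μ +
            μ.real (fixedPoints T) * ε := by
          rw [integral_add (integrable_dist_semidirectAct hX hf hβ).integrableOn integrableOn_const,
            setIntegral_const, smul_eq_mul]
      _ ≤ _ := by gcongr; exact mul_le_of_le_one_left hε.le measureReal_le_one
  calc dist x₀ y₀ / 4 * μ.real (fixedPoints T)ᶜ + ∫ ω in fixedPoints T, (f ω).supDisplacement ∂μ
      ≤ ∫ ω, dist (semidirectAct f T ((fixedPoints T).piecewise β γ) ω)
          ((fixedPoints T).piecewise β γ ω) ∂μ + ε := by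
        rw [integral_dist_semidirectAct_piecewise hX hf hβ hγ]
        linarith
    _ ≤ _ := by gcongr; exact le_ciSup hbdd ⟨_, hβ.piecewise hFix hγ⟩

end SemidirectAction

/-- Let `(X,d)` be Polish of diameter `≤ 1` containing two points at distance
`r > 0`, `G = Isom(X,d)`, `G̃ = L⁰([0,1],G) ⋊ Aut([0,1])`. For `(f,T) ∈ G̃`, with
`A = {ω : f(ω) ≠ e ∧ T(ω) = ω}`, `B = {ω : T(ω) ≠ ω}`,
`dᵤ(g,e) = sup_x d(g x, x)` and `L_u((f,T),(C_e,Id)) = sup_α ∫ d(f(ω)(α(T⁻¹ω)), α(ω)) dω`,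
one has `(r/8)·μ(B) + ∫_A dᵤ(f(ω),e) ≤ L_u((f,T),(C_e,Id)) ≤ μ(B) + ∫_A dᵤ(f(ω),e)`. -/
theorem stmt10 {X : Type*} [MetricSpace X] [PolishSpace X]
    [MeasurableSpace X] [BorelSpace X]
    (hd_bdd : ∀ x y : X, dist x y ≤ 1)
    (r : ℝ) (hr : 0 < r) (x₀ y₀ : X) (hxy : dist x₀ y₀ = r)
    (f : unitInterval → (X ≃ᵢ X)) (hf : Measurable f) (T : MAut) :
    (r / 8) * (volume {ω : unitInterval | T.1 ω ≠ ω}).toReal +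
        (∫ ω in {ω : unitInterval | f ω ≠ IsometryEquiv.refl X ∧ T.1 ω = ω},
          ⨆ x : X, dist (f ω x) x) ≤
      (⨆ α : {a : unitInterval → X // Measurable a},
        ∫ ω : unitInterval, dist (f ω (α.1 (T.1.symm ω))) (α.1 ω)) ∧
    (⨆ α : {a : unitInterval → X // Measurable a},
        ∫ ω : unitInterval, dist (f ω (α.1 (T.1.symm ω))) (α.1 ω)) ≤
      (volume {ω : unitInterval | T.1 ω ≠ ω}).toReal +
        (∫ ω in {ω : unitInterval | f ω ≠ IsometryEquiv.refl X ∧ T.1 ω = ω},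
          ⨆ x : X, dist (f ω x) x) := by
  have hA : ∫ ω in {ω | f ω ≠ IsometryEquiv.refl X ∧ T.1 ω = ω}, (f ω).supDisplacement =
      ∫ ω in fixedPoints T.1, (f ω).supDisplacement :=
    (setIntegral_eq_of_subset_of_forall_sdiff_eq_zero (measurableSet_fixedPoints T.1.measurable)
      (fun ω hω => hω.2) fun ω ⟨hω, hωA⟩ => by
        rw [show f ω = IsometryEquiv.refl X from not_not.mp fun h => hωA ⟨h, hω⟩]
        exact IsometryEquiv.supDisplacement_refl).symm
  have : Nonempty {a : unitInterval → X // Measurable a} := ⟨⟨fun _ => x₀, measurable_const⟩⟩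
  refine ⟨?_, ciSup_le fun α => ?_⟩
  · calc r / 8 * volume.real (fixedPoints T.1)ᶜ +
          ∫ ω in {ω | f ω ≠ IsometryEquiv.refl X ∧ T.1 ω = ω}, (f ω).supDisplacement
        ≤ dist x₀ y₀ / 4 * volume.real (fixedPoints T.1)ᶜ +
          ∫ ω in fixedPoints T.1, (f ω).supDisplacement := by
          rw [hA, hxy]; gcongr; linarith
      _ ≤ _ := quarter_mul_add_setIntegral_supDisplacement_le_iSup hd_bdd hf x₀ y₀
  · exact (integral_dist_semidirectAct_le hd_bdd hf α.2).trans_eq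
      (congrArg (volume.real (fixedPoints T.1)ᶜ + ·) hA.symm)
end
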